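/- The assignments L ↦ π_*L and N ↦ π*N are mutually inverse bijections between the set of Lagrangian subspaces L ⊆ V × V* with ker L = ker π and the set of Lagrangian subspaces N ⊆ Q × Q* with ker N = 0. (Fibrewise linear-algebra form of the one-to-one correspondence between 0-shifted Poisson structures on a Lie groupoid and Poisson structures on its orbit space, given by pushforward and pullback along the quotient map.) -/
import Mathlib


/-- A subset `S ⊆ V × V*` is Lagrangian if it equals its orthogonal
complement with respect to the symmetric pairing
`⟨(v,α),(w,β)⟩ = α(w) + β(v)` (such a subset is automatically a subspace). -/
def IsLagrangianSet {V : Type*} [AddCommGroup V] [Module ℝ V]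
    (S : Set (V × Module.Dual ℝ V)) : Prop :=
  ∀ x : V × Module.Dual ℝ V, x ∈ S ↔ ∀ y ∈ S, x.2 y.1 + y.2 x.1 = 0

/-- The pushforward `π_*L = {(π v, β) : (v, β∘π) ∈ L}`. -/
def pushf {V Q : Type*} [AddCommGroup V] [Module ℝ V] [AddCommGroup Q]
    [Module ℝ Q] (π : V →ₗ[ℝ] Q) (L : Set (V × Module.Dual ℝ V)) :
    Set (Q × Module.Dual ℝ Q) :=
  {q | ∃ v : V, π v = q.1 ∧ (v, q.2 ∘ₗ π) ∈ L}

/-- The pullback `π*N = {(v, β∘π) : (π v, β) ∈ N}`. -/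
def pullb {V Q : Type*} [AddCommGroup V] [Module ℝ V] [AddCommGroup Q]
    [Module ℝ Q] (π : V →ₗ[ℝ] Q) (N : Set (Q × Module.Dual ℝ Q)) :
    Set (V × Module.Dual ℝ V) :=
  {p | ∃ β : Module.Dual ℝ Q, p.2 = β ∘ₗ π ∧ (π p.1, β) ∈ N}

/-- Precomposition with a surjective map is injective on dual spaces. -/
private lemma comp_left_injective' {V Q : Type*} [AddCommGroup V] [Module ℝ V]
    [AddCommGroup Q] [Module ℝ Q] (π : V →ₗ[ℝ] Q) (hπ : Function.Surjective π)
    {β γ : Module.Dual ℝ Q} (h : β ∘ₗ π = γ ∘ₗ π) : β = γ := by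
  ext q
  obtain ⟨v, rfl⟩ := hπ q
  exact LinearMap.congr_fun h v

/-- A covector vanishing on `ker π` factors through the surjection `π`. -/
private lemma exists_factor' {V Q : Type*} [AddCommGroup V] [Module ℝ V]
    [AddCommGroup Q] [Module ℝ Q] (π : V →ₗ[ℝ] Q) (hπ : Function.Surjective π)
    (α : Module.Dual ℝ V) (h : ∀ w, π w = 0 → α w = 0) :
    ∃ β : Module.Dual ℝ Q, α = β ∘ₗ π := by
  obtain ⟨σ, hσ⟩ := π.exists_rightInverse_of_surjective (LinearMap.range_eq_top.mpr hπ)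
  refine ⟨α ∘ₗ σ, ?_⟩
  ext v
  have h1 : π (σ (π v) - v) = 0 := by
    have := LinearMap.congr_fun hσ (π v)
    simp only [LinearMap.comp_apply, LinearMap.id_apply] at this
    simp [this]
  have h2 := h _ h1
  simp only [map_sub, sub_eq_zero] at h2
  simpa [LinearMap.comp_apply] using h2.symm

private lemma lagr_zero' {V : Type*} [AddCommGroup V] [Module ℝ V]
    {S : Set (V × Module.Dual ℝ V)} (hS : IsLagrangianSet S) :
    (0 : V × Module.Dual ℝ V) ∈ S := by
  rw [hS]
  intro y hy
  simp

private lemma lagr_add' {V : Type*} [AddCommGroup V] [Module ℝ V]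
    {S : Set (V × Module.Dual ℝ V)} (hS : IsLagrangianSet S)
    {x y : V × Module.Dual ℝ V} (hx : x ∈ S) (hy : y ∈ S) : x + y ∈ S := by
  rw [hS]
  intro z hz
  have h1 := (hS x).mp hx z hz
  have h2 := (hS y).mp hy z hz
  simp only [Prod.fst_add, Prod.snd_add, LinearMap.add_apply, map_add]
  linarith

/-- Pushforward and pullback along a surjective linear map `π : V → Q` are
mutually inverse bijections between Lagrangian subspaces `L ⊆ V × V*` with
`ker L = ker π` and Lagrangian subspaces `N ⊆ Q × Q*` with `ker N = 0`
(fibrewise form of the correspondence between 0-shifted Poisson structures on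
a Lie groupoid and Poisson structures on its orbit space). -/
theorem pushforward_pullback_bijection
    {V Q : Type*} [AddCommGroup V] [Module ℝ V] [FiniteDimensional ℝ V]
    [AddCommGroup Q] [Module ℝ Q] [FiniteDimensional ℝ Q]
    (π : V →ₗ[ℝ] Q) (hπ : Function.Surjective π) :
    (∀ L : Set (V × Module.Dual ℝ V), IsLagrangianSet L →
      (∀ v : V, ((v, (0 : Module.Dual ℝ V)) ∈ L ↔ π v = 0)) →
      IsLagrangianSet (pushf π L) ∧
      (∀ q : Q, (q, (0 : Module.Dual ℝ Q)) ∈ pushf π L → q = 0) ∧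
      pullb π (pushf π L) = L) ∧
    (∀ N : Set (Q × Module.Dual ℝ Q), IsLagrangianSet N →
      (∀ q : Q, (q, (0 : Module.Dual ℝ Q)) ∈ N → q = 0) →
      IsLagrangianSet (pullb π N) ∧
      (∀ v : V, ((v, (0 : Module.Dual ℝ V)) ∈ pullb π N ↔ π v = 0)) ∧
      pushf π (pullb π N) = N) := by
  constructor
  · -- Pushforward direction
    intro L hL hker
    -- every covector occurring in L vanishes on ker π, hence factors through π
    have hfac : ∀ v α, (v, α) ∈ L → ∃ β : Module.Dual ℝ Q, α = β ∘ₗ π := by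
      intro v α hvα
      apply exists_factor' π hπ
      intro w hw
      have hwL : (w, (0 : Module.Dual ℝ V)) ∈ L := (hker w).mpr hw
      have := (hL (v, α)).mp hvα (w, 0) hwL
      simpa using this
    -- isotropy of the pushforward
    have hiso : ∀ x ∈ pushf π L, ∀ y ∈ pushf π L, x.2 y.1 + y.2 x.1 = 0 := by
      rintro ⟨q, β⟩ ⟨v, hv, hvL⟩ ⟨q', β'⟩ ⟨v', hv', hv'L⟩
      have h := (hL _).mp hvL _ hv'L
      simp only [LinearMap.comp_apply] at h
      dsimp only at hv hv' ⊢
      rw [← hv, ← hv']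
      exact h
    refine ⟨?_, ?_, ?_⟩
    · -- pushf π L is Lagrangian
      rintro ⟨q, β⟩
      constructor
      · intro hx y hy
        exact hiso _ hx y hy
      · intro hx
        obtain ⟨v, hv⟩ := hπ q
        refine ⟨v, hv, ?_⟩
        rw [hL]
        rintro ⟨w, α⟩ hwα
        obtain ⟨γ, rfl⟩ := hfac w α hwα
        have hpush : (π w, γ) ∈ pushf π L := ⟨w, rfl, hwα⟩
        have h := hx (π w, γ) hpush
        simp only [LinearMap.comp_apply]
        simp only [] at h
        rw [← hv] at h
        linarith
    · -- trivial kernel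
      rintro q ⟨v, hv, hvL⟩
      have h0 : ((0 : Module.Dual ℝ Q) ∘ₗ π) = (0 : Module.Dual ℝ V) := by
        ext w; simp
      rw [h0] at hvL
      have := (hker v).mp hvL
      dsimp only at hv
      rw [← hv, this]
    · -- pullb (pushf L) = L
      ext ⟨v, α⟩
      constructor
      · rintro ⟨β, rfl, v', hv', hv'L⟩
        have hkmem : (v - v', (0 : Module.Dual ℝ V)) ∈ L := by
          apply (hker _).mpr
          simp [map_sub, hv']
        have hsum := lagr_add' hL hv'L hkmem
        have heq : ((v' : V), β ∘ₗ π) + (v - v', (0 : Module.Dual ℝ V))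
            = (v, β ∘ₗ π) := by
          apply Prod.ext <;> simp
        rwa [heq] at hsum
      · intro hvα
        obtain ⟨β, rfl⟩ := hfac v α hvα
        exact ⟨β, rfl, v, rfl, hvα⟩
  · -- Pullback direction
    intro N hN hker
    have h00 : ((0 : Q), (0 : Module.Dual ℝ Q)) ∈ N := lagr_zero' hN
    refine ⟨?_, ?_, ?_⟩
    · -- pullb π N is Lagrangian
      rintro ⟨v, α⟩
      constructor
      · rintro ⟨β, hα, hmem⟩ y ⟨γ, hy2, hmem'⟩
        have h := (hN _).mp hmem _ hmem'
        simp only [] at h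
        rw [hα, hy2]
        simp only [LinearMap.comp_apply]
        linarith
      · intro hx
        have hαker : ∀ w, π w = 0 → α w = 0 := by
          intro w hw
          have hwmem : (w, (0 : Module.Dual ℝ V)) ∈ pullb π N := by
            refine ⟨0, by ext u; simp, ?_⟩
            rw [hw]; exact h00
          have := hx _ hwmem
          simpa using this
        obtain ⟨β, rfl⟩ := exists_factor' π hπ α hαker
        refine ⟨β, rfl, ?_⟩
        rw [hN]
        rintro ⟨q, γ⟩ hqγ
        obtain ⟨w, rfl⟩ := hπ q
        have hwmem : (w, γ ∘ₗ π) ∈ pullb π N := ⟨γ, rfl, hqγ⟩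
        have h := hx _ hwmem
        simp only [LinearMap.comp_apply] at h
        simp only []
        linarith
    · -- kernel equals ker π
      intro v
      constructor
      · rintro ⟨β, hβ, hmem⟩
        have hβ0 : β = 0 := by
          apply comp_left_injective' π hπ
          rw [← hβ]; ext w; simp
        rw [hβ0] at hmem
        exact hker _ hmem
      · intro h
        refine ⟨0, by ext u; simp, ?_⟩
        rw [h]; exact h00
    · -- pushf (pullb N) = N
      ext ⟨q, β⟩
      constructor
      · rintro ⟨v, hv, γ, hγ, hmem⟩
        have : β = γ := comp_left_injective' π hπ hγ
        dsimp only at hv hmem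
        rw [this, ← hv]
        exact hmem
      · intro h
        obtain ⟨v, hv⟩ := hπ q
        exact ⟨v, hv, β, rfl, by rw [hv]; exact h⟩
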